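/- An instance of Dyck-2 reachability is a no-instance if and only if there exists a separator for it. -/
import Mathlib


/-- The four-letter alphabet of Dyck-2: two kinds of opening and closing brackets. -/
inductive Sig2 : Type
  | o1 | c1 | o2 | c2
deriving DecidableEq

/-- The Dyck-2 language: the smallest language containing ε and closed under
concatenation and wrapping in either kind of matching brackets. -/
inductive IsDyck : List Sig2 → Prop
  | nil : IsDyck []
  | append {u v : List Sig2} : IsDyck u → IsDyck v → IsDyck (u ++ v)
  | br1 {u : List Sig2} : IsDyck u → IsDyck (Sig2.o1 :: u ++ [Sig2.c1])
  | br2 {u : List Sig2} : IsDyck u → IsDyck (Sig2.o2 :: u ++ [Sig2.c2])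

/-- `IsWalk E u v p` : `p` is a walk from `u` to `v` in the graph with edge set `E`. -/
def IsWalk {V : Type} (E : Set (V × V)) : V → V → List (V × V) → Prop
  | u, v, [] => u = v
  | u, v, e :: p => e ∈ E ∧ e.1 = u ∧ IsWalk E e.2 v p

/-- A walk is valid if its labels form a Dyck-2 word. -/
def IsValidWalk {V : Type} (E : Set (V × V)) (lab : V × V → Sig2) (u v : V)
    (p : List (V × V)) : Prop :=
  IsWalk E u v p ∧ IsDyck (p.map lab)


/-- The adjacency matrix of the edges labeled `σ`:
entry `(u, v)` is `1` iff `(u,v) ∈ E` and `lab (u,v) = σ`. -/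
def adjMat {n : ℕ} (E : Finset (Fin n × Fin n)) (lab : Fin n × Fin n → Sig2)
    (σ : Sig2) : Matrix (Fin n) (Fin n) ℕ :=
  fun u v => if (u, v) ∈ E ∧ lab (u, v) = σ then 1 else 0

/-- `boolM M` replaces every nonzero entry of `M` by `1`. -/
def boolM {m : ℕ} (M : Matrix (Fin m) (Fin m) ℕ) : Matrix (Fin m) (Fin m) ℕ :=
  fun i j => if M i j = 0 then 0 else 1

/-- Entrywise order on matrices. -/
def MatLE {m : ℕ} (A B : Matrix (Fin m) (Fin m) ℕ) : Prop :=
  ∀ i j, A i j ≤ B i j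

/-- A separator for an instance of Dyck-2 reachability: a sextuple of `n × n`
matrices with entries in `{0, 1, …, n²}`, with `M_S` a `0–1` matrix, satisfying
the ten constraints of Eq. (2). -/
structure Separator {n : ℕ} (E : Finset (Fin n × Fin n))
    (lab : Fin n × Fin n → Sig2) (s t : Fin n) where
  MS : Matrix (Fin n) (Fin n) ℕ
  MSS : Matrix (Fin n) (Fin n) ℕ
  M1oS : Matrix (Fin n) (Fin n) ℕ
  M2oS : Matrix (Fin n) (Fin n) ℕ
  M1 : Matrix (Fin n) (Fin n) ℕ
  M2 : Matrix (Fin n) (Fin n) ℕ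
  entries_bounded : ∀ i j, MS i j ≤ n ^ 2 ∧ MSS i j ≤ n ^ 2 ∧ M1oS i j ≤ n ^ 2 ∧
    M2oS i j ≤ n ^ 2 ∧ M1 i j ≤ n ^ 2 ∧ M2 i j ≤ n ^ 2
  MS_bool : ∀ i j, MS i j ≤ 1
  id_le : MatLE 1 MS
  eq_M1oS : adjMat E lab Sig2.o1 * MS = M1oS
  eq_M2oS : adjMat E lab Sig2.o2 * MS = M2oS
  eq_MSS : MS * MS = MSS
  eq_M1 : M1oS * adjMat E lab Sig2.c1 = M1
  eq_M2 : M2oS * adjMat E lab Sig2.c2 = M2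
  bool_MSS : MatLE (boolM MSS) MS
  bool_M1 : MatLE (boolM M1) MS
  bool_M2 : MatLE (boolM M2) MS
  MS_st : MS s t = 0

/-! ### Auxiliary lemmas -/

lemma isWalk_append {V : Type} (E : Set (V × V)) (u v : V) (p q : List (V × V)) :
    IsWalk E u v (p ++ q) ↔ ∃ w, IsWalk E u w p ∧ IsWalk E w v q := by
  induction p generalizing u with
  | nil =>
    constructor
    · intro h; exact ⟨u, rfl, h⟩
    · rintro ⟨w, rfl, h⟩; exact h
  | cons e p ih =>
    constructor
    · rintro ⟨he, h1, h2⟩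
      obtain ⟨w, hw1, hw2⟩ := (ih e.2).1 h2
      exact ⟨w, ⟨he, h1, hw1⟩, hw2⟩
    · rintro ⟨w, ⟨he, h1, hw1⟩, hw2⟩
      exact ⟨he, h1, (ih e.2).2 ⟨w, hw1, hw2⟩⟩

lemma matMul_entry_le {n a b : ℕ} {A B : Matrix (Fin n) (Fin n) ℕ}
    (hA : ∀ i j, A i j ≤ a) (hB : ∀ i j, B i j ≤ b) (i j : Fin n) :
    (A * B) i j ≤ n * (a * b) := by
  rw [Matrix.mul_apply]
  calc ∑ k, A i k * B k j ≤ ∑ _k : Fin n, a * b :=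
        Finset.sum_le_sum fun k _ => Nat.mul_le_mul (hA i k) (hB k j)
    _ = n * (a * b) := by simp [Finset.sum_const]

lemma one_le_matMul_entry {n : ℕ} {A B : Matrix (Fin n) (Fin n) ℕ} {i j : Fin n}
    (k : Fin n) (hA : 1 ≤ A i k) (hB : 1 ≤ B k j) : 1 ≤ (A * B) i j := by
  rw [Matrix.mul_apply]
  calc 1 = 1 * 1 := (one_mul 1).symm
    _ ≤ A i k * B k j := Nat.mul_le_mul hA hB
    _ ≤ ∑ k, A i k * B k j :=
        Finset.single_le_sum (f := fun k => A i k * B k j) (fun _ _ => Nat.zero_le _) (Finset.mem_univ k)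

lemma matMul_entry_ne_zero {n : ℕ} {A B : Matrix (Fin n) (Fin n) ℕ} {i j : Fin n}
    (h : (A * B) i j ≠ 0) : ∃ k, A i k ≠ 0 ∧ B k j ≠ 0 := by
  rw [Matrix.mul_apply] at h
  obtain ⟨k, _, hk⟩ := Finset.exists_ne_zero_of_sum_ne_zero h
  exact ⟨k, mul_ne_zero_iff.1 hk⟩

lemma adjMat_le_one {n : ℕ} (E : Finset (Fin n × Fin n)) (lab : Fin n × Fin n → Sig2)
    (σ : Sig2) (i j : Fin n) : adjMat E lab σ i j ≤ 1 := by
  unfold adjMat; split_ifs <;> simp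

lemma adjMat_ne_zero {n : ℕ} {E : Finset (Fin n × Fin n)} {lab : Fin n × Fin n → Sig2}
    {σ : Sig2} {i j : Fin n} (h : adjMat E lab σ i j ≠ 0) :
    (i, j) ∈ E ∧ lab (i, j) = σ := by
  by_contra hc
  exact h (by simp [adjMat, hc])

lemma one_le_adjMat {n : ℕ} {E : Finset (Fin n × Fin n)} {lab : Fin n × Fin n → Sig2}
    {σ : Sig2} {i j : Fin n} (hE : (i, j) ∈ E) (hl : lab (i, j) = σ) :
    1 ≤ adjMat E lab σ i j := by
  simp [adjMat, hE, hl]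

/-- Concatenation of valid walks. -/
lemma validWalk_append {V : Type} {E : Set (V × V)} {lab : V × V → Sig2} {u w v : V}
    {p q : List (V × V)} (hp : IsValidWalk E lab u w p) (hq : IsValidWalk E lab w v q) :
    IsValidWalk E lab u v (p ++ q) :=
  ⟨(isWalk_append E u v p q).2 ⟨w, hp.1, hq.1⟩,
   by rw [List.map_append]; exact hp.2.append hq.2⟩

/-- Wrapping a valid walk in a pair of matching edges, kind 1. -/
lemma validWalk_br1 {V : Type} {E : Set (V × V)} {lab : V × V → Sig2} {u k₁ k₂ v : V}
    {p : List (V × V)} (he : (u, k₁) ∈ E) (hle : lab (u, k₁) = Sig2.o1)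
    (hp : IsValidWalk E lab k₁ k₂ p) (hf : (k₂, v) ∈ E) (hlf : lab (k₂, v) = Sig2.c1) :
    IsValidWalk E lab u v ((u, k₁) :: p ++ [(k₂, v)]) := by
  refine ⟨⟨he, rfl, (isWalk_append E k₁ v p [(k₂, v)]).2 ⟨k₂, hp.1, hf, rfl, rfl⟩⟩, ?_⟩
  have : ((u, k₁) :: p ++ [(k₂, v)]).map lab = Sig2.o1 :: p.map lab ++ [Sig2.c1] := by
    simp [hle, hlf]
  rw [this]
  exact hp.2.br1

/-- Wrapping a valid walk in a pair of matching edges, kind 2. -/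
lemma validWalk_br2 {V : Type} {E : Set (V × V)} {lab : V × V → Sig2} {u k₁ k₂ v : V}
    {p : List (V × V)} (he : (u, k₁) ∈ E) (hle : lab (u, k₁) = Sig2.o2)
    (hp : IsValidWalk E lab k₁ k₂ p) (hf : (k₂, v) ∈ E) (hlf : lab (k₂, v) = Sig2.c2) :
    IsValidWalk E lab u v ((u, k₁) :: p ++ [(k₂, v)]) := by
  refine ⟨⟨he, rfl, (isWalk_append E k₁ v p [(k₂, v)]).2 ⟨k₂, hp.1, hf, rfl, rfl⟩⟩, ?_⟩
  have : ((u, k₁) :: p ++ [(k₂, v)]).map lab = Sig2.o2 :: p.map lab ++ [Sig2.c2] := by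
    simp [hle, hlf]
  rw [this]
  exact hp.2.br2

open Classical in
/-- The reachability matrix : entry `(u,v)` is `1` iff there is a valid walk. -/
noncomputable def reachMS {n : ℕ} (E : Finset (Fin n × Fin n))
    (lab : Fin n × Fin n → Sig2) : Matrix (Fin n) (Fin n) ℕ :=
  fun u v => if ∃ p, IsValidWalk (↑E) lab u v p then 1 else 0

lemma reachMS_le_one {n : ℕ} (E : Finset (Fin n × Fin n)) (lab : Fin n × Fin n → Sig2)
    (u v : Fin n) : reachMS E lab u v ≤ 1 := by
  unfold reachMS; split_ifs <;> simp

lemma reachMS_ne_zero {n : ℕ} {E : Finset (Fin n × Fin n)} {lab : Fin n × Fin n → Sig2}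
    {u v : Fin n} (h : reachMS E lab u v ≠ 0) :
    ∃ p, IsValidWalk (↑E) lab u v p := by
  by_contra hc
  exact h (by simp [reachMS, hc])

lemma reachMS_of_valid {n : ℕ} {E : Finset (Fin n × Fin n)} {lab : Fin n × Fin n → Sig2}
    {u v : Fin n} (h : ∃ p, IsValidWalk (↑E) lab u v p) :
    reachMS E lab u v = 1 := by
  simp [reachMS, h]

/-- Soundness of a separator: any valid walk forces `MS` to be positive. -/
lemma separator_walk {n : ℕ} {E : Finset (Fin n × Fin n)} {lab : Fin n × Fin n → Sig2}
    {s t : Fin n} (S : Separator E lab s t) :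
    ∀ w, IsDyck w → ∀ (p : List (Fin n × Fin n)) (u v : Fin n),
      IsWalk (↑E) u v p → p.map lab = w → 1 ≤ S.MS u v := by
  intro w hw
  induction hw with
  | nil =>
    intro p u v hwalk hmap
    have hp : p = [] := List.map_eq_nil_iff.1 hmap
    subst hp
    have huv : u = v := hwalk
    subst huv
    have := S.id_le u u
    simpa [Matrix.one_apply_eq] using this
  | append h1 h2 ih1 ih2 =>
    intro p u v hwalk hmap
    obtain ⟨p1, p2, rfl, hm1, hm2⟩ := List.map_eq_append_iff.1 hmap
    obtain ⟨m, hw1, hw2⟩ := (isWalk_append _ u v p1 p2).1 hwalk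
    have hMSS : 1 ≤ S.MSS u v := by
      rw [← S.eq_MSS]
      exact one_le_matMul_entry m (ih1 p1 u m hw1 hm1) (ih2 p2 m v hw2 hm2)
    have hb := S.bool_MSS u v
    simp only [boolM] at hb
    rw [if_neg (by omega)] at hb
    exact hb
  | br1 h ih =>
    intro p u v hwalk hmap
    obtain ⟨e, p', rfl, he, hm'⟩ := List.map_eq_cons_iff.1 hmap
    obtain ⟨q, r, rfl, hq, hr⟩ := List.map_eq_append_iff.1 hm'
    obtain ⟨f, r', rfl, hf, hr'⟩ := List.map_eq_cons_iff.1 hr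
    have hr0 : r' = [] := List.map_eq_nil_iff.1 hr'
    subst hr0
    obtain ⟨heE, he1, hwrest⟩ := hwalk
    obtain ⟨m, hwq, hfE, hf1, hf2⟩ := (isWalk_append _ e.2 v q [f]).1 hwrest
    have hms : 1 ≤ S.MS e.2 m := ih q e.2 m hwq hq
    have heq : (u, e.2) = e := by rw [← he1]
    have hfq : (m, v) = f := by rw [← hf1, ← hf2]
    have hAo : 1 ≤ adjMat E lab Sig2.o1 u e.2 := by
      rw [show adjMat E lab Sig2.o1 u e.2 = adjMat E lab Sig2.o1 e.1 e.2 from by rw [he1]]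
      exact one_le_adjMat (by simpa using heE) he
    have hAc : 1 ≤ adjMat E lab Sig2.c1 m v := by
      rw [show adjMat E lab Sig2.c1 m v = adjMat E lab Sig2.c1 f.1 f.2 from by rw [hf1, hf2]]
      exact one_le_adjMat (by simpa using hfE) hf
    have hM1 : 1 ≤ S.M1 u v := by
      rw [← S.eq_M1, ← S.eq_M1oS]
      exact one_le_matMul_entry m (one_le_matMul_entry e.2 hAo hms) hAc
    have hb := S.bool_M1 u v
    simp only [boolM] at hb
    rw [if_neg (by omega)] at hb
    exact hb
  | br2 h ih =>
    intro p u v hwalk hmap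
    obtain ⟨e, p', rfl, he, hm'⟩ := List.map_eq_cons_iff.1 hmap
    obtain ⟨q, r, rfl, hq, hr⟩ := List.map_eq_append_iff.1 hm'
    obtain ⟨f, r', rfl, hf, hr'⟩ := List.map_eq_cons_iff.1 hr
    have hr0 : r' = [] := List.map_eq_nil_iff.1 hr'
    subst hr0
    obtain ⟨heE, he1, hwrest⟩ := hwalk
    obtain ⟨m, hwq, hfE, hf1, hf2⟩ := (isWalk_append _ e.2 v q [f]).1 hwrest
    have hms : 1 ≤ S.MS e.2 m := ih q e.2 m hwq hq
    have hAo : 1 ≤ adjMat E lab Sig2.o2 u e.2 := by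
      rw [show adjMat E lab Sig2.o2 u e.2 = adjMat E lab Sig2.o2 e.1 e.2 from by rw [he1]]
      exact one_le_adjMat (by simpa using heE) he
    have hAc : 1 ≤ adjMat E lab Sig2.c2 m v := by
      rw [show adjMat E lab Sig2.c2 m v = adjMat E lab Sig2.c2 f.1 f.2 from by rw [hf1, hf2]]
      exact one_le_adjMat (by simpa using hfE) hf
    have hM2 : 1 ≤ S.M2 u v := by
      rw [← S.eq_M2, ← S.eq_M2oS]
      exact one_le_matMul_entry m (one_le_matMul_entry e.2 hAo hms) hAc
    have hb := S.bool_M2 u v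
    simp only [boolM] at hb
    rw [if_neg (by omega)] at hb
    exact hb

/-- An instance of Dyck-2 reachability is a no-instance iff there exists a
separator for it. -/
theorem dyck2Reach_no_iff_exists_separator
    {n : ℕ} (E : Finset (Fin n × Fin n)) (lab : Fin n × Fin n → Sig2)
    (s t : Fin n) :
    (¬ ∃ p : List (Fin n × Fin n), IsValidWalk (↑E) lab s t p) ↔
      Nonempty (Separator E lab s t) := by
  classical
  have hn : 0 < n := by
    rcases Nat.eq_zero_or_pos n with h | h
    · exact absurd s.isLt (by omega)
    · exact h
  constructor
  · intro hno
    set MS := reachMS E lab with hMSdef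
    have hMSle : ∀ i j, MS i j ≤ 1 := reachMS_le_one E lab
    have hAle : ∀ σ i j, adjMat E lab σ i j ≤ 1 := fun σ => adjMat_le_one E lab σ
    have hMSSle : ∀ i j, (MS * MS) i j ≤ n * (1 * 1) := matMul_entry_le hMSle hMSle
    have hM1oSle : ∀ i j, (adjMat E lab Sig2.o1 * MS) i j ≤ n * (1 * 1) :=
      matMul_entry_le (hAle _) hMSle
    have hM2oSle : ∀ i j, (adjMat E lab Sig2.o2 * MS) i j ≤ n * (1 * 1) :=
      matMul_entry_le (hAle _) hMSle
    have hM1le : ∀ i j, (adjMat E lab Sig2.o1 * MS * adjMat E lab Sig2.c1) i j ≤ n * (n * 1) :=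
      matMul_entry_le (fun i j => by simpa using hM1oSle i j) (hAle _)
    have hM2le : ∀ i j, (adjMat E lab Sig2.o2 * MS * adjMat E lab Sig2.c2) i j ≤ n * (n * 1) :=
      matMul_entry_le (fun i j => by simpa using hM2oSle i j) (hAle _)
    have hnn : n * (n * 1) = n ^ 2 := by ring
    have hn2 : n ≤ n ^ 2 := by nlinarith
    refine ⟨⟨MS, MS * MS, adjMat E lab Sig2.o1 * MS, adjMat E lab Sig2.o2 * MS,
      adjMat E lab Sig2.o1 * MS * adjMat E lab Sig2.c1,
      adjMat E lab Sig2.o2 * MS * adjMat E lab Sig2.c2,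
      ?_, hMSle, ?_, rfl, rfl, rfl, rfl, rfl, ?_, ?_, ?_, ?_⟩⟩
    · -- entries bounded
      intro i j
      refine ⟨le_trans (hMSle i j) (by nlinarith), ?_, ?_, ?_, ?_, ?_⟩
      · exact le_trans (hMSSle i j) (by omega)
      · exact le_trans (hM1oSle i j) (by omega)
      · exact le_trans (hM2oSle i j) (by omega)
      · exact le_trans (hM1le i j) (by omega)
      · exact le_trans (hM2le i j) (by omega)
    · -- id_le
      intro i j
      rcases eq_or_ne i j with rfl | hij
      · rw [Matrix.one_apply_eq]
        rw [hMSdef, reachMS_of_valid ⟨[], rfl, IsDyck.nil⟩]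
      · rw [Matrix.one_apply_ne hij]
        exact Nat.zero_le _
    · -- bool_MSS
      intro i j
      simp only [boolM]
      split_ifs with h
      · exact Nat.zero_le _
      · obtain ⟨k, h1, h2⟩ := matMul_entry_ne_zero h
        obtain ⟨p, hp⟩ := reachMS_ne_zero h1
        obtain ⟨q, hq⟩ := reachMS_ne_zero h2
        rw [hMSdef, reachMS_of_valid ⟨p ++ q, validWalk_append hp hq⟩]
    · -- bool_M1
      intro i j
      simp only [boolM]
      split_ifs with h
      · exact Nat.zero_le _
      · obtain ⟨k, h1, h2⟩ := matMul_entry_ne_zero h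
        obtain ⟨k2, h3, h4⟩ := matMul_entry_ne_zero h1
        obtain ⟨heE, hel⟩ := adjMat_ne_zero h3
        obtain ⟨hfE, hfl⟩ := adjMat_ne_zero h2
        obtain ⟨p, hp⟩ := reachMS_ne_zero h4
        rw [hMSdef, reachMS_of_valid ⟨(i, k2) :: p ++ [(k, j)],
          validWalk_br1 (by simpa using heE) hel hp (by simpa using hfE) hfl⟩]
    · -- bool_M2
      intro i j
      simp only [boolM]
      split_ifs with h
      · exact Nat.zero_le _
      · obtain ⟨k, h1, h2⟩ := matMul_entry_ne_zero h
        obtain ⟨k2, h3, h4⟩ := matMul_entry_ne_zero h1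
        obtain ⟨heE, hel⟩ := adjMat_ne_zero h3
        obtain ⟨hfE, hfl⟩ := adjMat_ne_zero h2
        obtain ⟨p, hp⟩ := reachMS_ne_zero h4
        rw [hMSdef, reachMS_of_valid ⟨(i, k2) :: p ++ [(k, j)],
          validWalk_br2 (by simpa using heE) hel hp (by simpa using hfE) hfl⟩]
    · -- MS s t = 0
      rw [hMSdef]
      simp [reachMS, hno]
  · rintro ⟨S⟩ ⟨p, hwalk, hdyck⟩
    have := separator_walk S _ hdyck p s t hwalk rfl
    have h0 := S.MS_st
    omega
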